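/- In any stable matching M' of the reduced HR instance G', for every hospital h of the original HRLQ instance, the total number of non-dummy residents matched across all level copies h^0,...,h^{ℓ−1} of h is at most q^+(h). -/

import Mathlib

open Finset

attribute [local instance] Classical.propDecidable

namespace HRLQ

variable {R H : Type}

/-- Number of levels in the reduced HR instance (`T = 2` for `G'`, `T = |R|` for `G''`). -/
def ell (H : Type) [Fintype H] (T : ℕ) (qm : H → ℕ) : ℕ := T + ∑ h, qm h

/-- Dummy residents of the reduced instance: a dummy `⟨h, s, i⟩` is the `i`-th level-`s`
dummy resident corresponding to hospital `h`; levels run over `0,…,ℓ-2`, there are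
`q⁺(h)` dummies at levels `< T` and `q⁻(h)` dummies at levels `≥ T`. -/
def Dummy (H : Type) [Fintype H] (T : ℕ) (qp qm : H → ℕ) : Type :=
  {x : Σ h : H, Fin (ell H T qm) × Fin (qp h) //
    x.2.1.val ≤ ell H T qm - 2 ∧ (T ≤ x.2.1.val → x.2.2.val < qm x.1)}

noncomputable instance [Fintype H] (T : ℕ) (qp qm : H → ℕ) : Fintype (Dummy H T qp qm) := by
  classical
  unfold Dummy
  infer_instance

variable [Fintype H]

def Dummy.h {T : ℕ} {qp qm : H → ℕ} (d : Dummy H T qp qm) : H := d.1.1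
def Dummy.s {T : ℕ} {qp qm : H → ℕ} (d : Dummy H T qp qm) : ℕ := d.1.2.1.val
def Dummy.i {T : ℕ} {qp qm : H → ℕ} (d : Dummy H T qp qm) : ℕ := d.1.2.2.val

/-- Residents of the reduced instance: original residents plus dummies. -/
def Res (R H : Type) [Fintype H] (T : ℕ) (qp qm : H → ℕ) : Type := R ⊕ Dummy H T qp qm

/-- Hospitals of the reduced instance: level copies `h^s`, `s ∈ {0,…,ℓ-1}`. -/
def Hos (H : Type) [Fintype H] (T : ℕ) (qm : H → ℕ) : Type := H × Fin (ell H T qm)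

noncomputable instance [Fintype R] (T : ℕ) (qp qm : H → ℕ) : Fintype (Res R H T qp qm) := by
  unfold Res; infer_instance

instance (T : ℕ) (qm : H → ℕ) : Fintype (Hos H T qm) := by
  unfold Hos; infer_instance

/-- Capacity of the level copy `h^s`. -/
def cap (T : ℕ) (qp qm : H → ℕ) (hs : Hos H T qm) : ℕ :=
  if hs.2.val < T then qp hs.1 else qm hs.1

/-- Acceptability (edges) in the reduced instance. A level-`s` dummy of `h` is acceptable to
`h^s` and `h^{s+1}`, except that the first `q⁺(h) - q⁻(h)` dummies at level `T-1` only list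
`h^{T-1}`.  An original resident `r` is acceptable to every copy of each hospital on its list. -/
def edge (T : ℕ) (qp qm : H → ℕ) (E : R → H → Prop) :
    Res R H T qp qm → Hos H T qm → Prop
  | Sum.inl r, hs => E r hs.1
  | Sum.inr d, hs => d.h = hs.1 ∧
      (hs.2.val = d.s ∨
        (hs.2.val = d.s + 1 ∧ ¬(d.s = T - 1 ∧ d.i < qp hs.1 - qm hs.1)))

/-- Rank (smaller = better) that a dummy assigns to hospital copies. -/
noncomputable def dkey {T : ℕ} {qp qm : H → ℕ} (d : Dummy H T qp qm) (a : Hos H T qm) : ℕ :=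
  if a.1 = d.h ∧ a.2.val = d.s then 0
  else if a.1 = d.h ∧ a.2.val = d.s + 1 then 1 else 2

/-- Preferences of residents of the reduced instance over hospital copies:
an original resident prefers higher level copies, and within a level follows its original
ranking `rankR` (smaller rank = more preferred); a level-`s` dummy of `h` has list `⟨h^s, h^{s+1}⟩`. -/
def prefRes (T : ℕ) (qp qm : H → ℕ) (rankR : R → H → ℕ) :
    Res R H T qp qm → Hos H T qm → Hos H T qm → Prop
  | Sum.inl r, a, b => b.2.val < a.2.val ∨ (a.2.val = b.2.val ∧ rankR r a.1 < rankR r b.1)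
  | Sum.inr d, a, b => dkey d a < dkey d b

/-- Preference class of a resident in the list of `h^s`: level-`(s-1)` dummies of `h` first,
then original residents, then level-`s` dummies of `h`. -/
noncomputable def hclass {T : ℕ} {qp qm : H → ℕ} (hs : Hos H T qm) : Res R H T qp qm → ℕ
  | Sum.inl _ => 1
  | Sum.inr d =>
      if d.h = hs.1 ∧ 1 ≤ hs.2.val ∧ d.s = hs.2.val - 1 then 0
      else if d.h = hs.1 ∧ d.s = hs.2.val then 2 else 3

/-- Rank within a preference class. -/
def hinner {T : ℕ} {qp qm : H → ℕ} (rankH : H → R → ℕ) (hs : Hos H T qm) :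
    Res R H T qp qm → ℕ
  | Sum.inl r => rankH hs.1 r
  | Sum.inr d => d.i

/-- Preferences of hospital copies over residents of the reduced instance. -/
def prefHos (T : ℕ) (qp qm : H → ℕ) (rankH : H → R → ℕ) (hs : Hos H T qm)
    (x y : Res R H T qp qm) : Prop :=
  hclass hs x < hclass hs y ∨
    (hclass hs x = hclass hs y ∧ hinner rankH hs x < hinner rankH hs y)

variable [Fintype R]

/-- The set of residents matched to the hospital copy `hs`. -/
noncomputable def mset {T : ℕ} {qp qm : H → ℕ}
    (M : Res R H T qp qm → Option (Hos H T qm)) (hs : Hos H T qm) :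
    Finset (Res R H T qp qm) :=
  univ.filter (fun x => M x = some hs)

/-- `M` is a matching of the reduced (HR) instance: it respects acceptability and capacities. -/
def isMatchingRed (T : ℕ) (qp qm : H → ℕ) (E : R → H → Prop)
    (M : Res R H T qp qm → Option (Hos H T qm)) : Prop :=
  (∀ x hs, M x = some hs → edge T qp qm E x hs) ∧
    ∀ hs, (mset M hs).card ≤ cap T qp qm hs

/-- `(x, hs)` is a blocking pair for `M` in the reduced instance. -/
def blocksRed (T : ℕ) (qp qm : H → ℕ) (E : R → H → Prop) (rankR : R → H → ℕ)
    (rankH : H → R → ℕ) (M : Res R H T qp qm → Option (Hos H T qm))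
    (x : Res R H T qp qm) (hs : Hos H T qm) : Prop :=
  edge T qp qm E x hs ∧
    (∀ hs', M x = some hs' → prefRes T qp qm rankR x hs hs') ∧
    ((mset M hs).card < cap T qp qm hs ∨
      ∃ y ∈ mset M hs, prefHos T qp qm rankH hs x y)

/-- Stability in the reduced HR instance. -/
def stableRed (T : ℕ) (qp qm : H → ℕ) (E : R → H → Prop) (rankR : R → H → ℕ)
    (rankH : H → R → ℕ) (M : Res R H T qp qm → Option (Hos H T qm)) : Prop :=
  isMatchingRed T qp qm E M ∧ ∀ x hs, ¬ blocksRed T qp qm E rankR rankH M x hs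

/-- A hospital copy is active if it is matched to at least one non-dummy resident. -/
def active {T : ℕ} {qp qm : H → ℕ}
    (M : Res R H T qp qm → Option (Hos H T qm)) (hs : Hos H T qm) : Prop :=
  ∃ r : R, M (Sum.inl r) = some hs

/-- The matching of the original HRLQ instance obtained from a matching of the reduced
instance: `r` is matched to `h` iff `r` is matched to some level copy of `h`. -/
def mapToG {T : ℕ} {qp qm : H → ℕ}
    (M : Res R H T qp qm → Option (Hos H T qm)) : R → Option H :=
  fun r => (M (Sum.inl r)).map Prod.fst

/-- Set of residents matched to `h` in a matching of the original instance. -/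
noncomputable def msetO (N : R → Option H) (h : H) : Finset R :=
  univ.filter (fun r => N r = some h)

/-- Feasibility in the original HRLQ instance. -/
def feasibleO (E : R → H → Prop) (qp qm : H → ℕ) (N : R → Option H) : Prop :=
  (∀ r h, N r = some h → E r h) ∧
    ∀ h, qm h ≤ (msetO N h).card ∧ (msetO N h).card ≤ qp h

/-- Cardinality of a matching of the original instance. -/
noncomputable def sizeO (N : R → Option H) : ℕ :=
  (univ.filter (fun r : R => N r ≠ none)).card

/-- `r ∈ R_i`: `r` is matched to a level-`i` hospital copy (unmatched residents are in `R_0`). -/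
def inRlev {T : ℕ} {qp qm : H → ℕ}
    (M : Res R H T qp qm → Option (Hos H T qm)) (i : ℕ) (r : R) : Prop :=
  (∃ hs, M (Sum.inl r) = some hs ∧ hs.2.val = i) ∨ (M (Sum.inl r) = none ∧ i = 0)

/-- `h ∈ H_j`: the copy `h^j` is active (with the convention that a hospital matched to no
resident is placed in `H_{T-1}` if it has no lower quota and in `H_{ℓ-1}` otherwise). -/
def inHlev (T : ℕ) (qp qm : H → ℕ)
    (M : Res R H T qp qm → Option (Hos H T qm)) (j : ℕ) (h : H) : Prop :=
  (∃ s : Fin (ell H T qm), s.val = j ∧ active M (h, s)) ∨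
    ((∀ r, mapToG M r ≠ some h) ∧
      ((qm h = 0 ∧ j = T - 1) ∨ (0 < qm h ∧ j = ell H T qm - 1)))

/-- Residents matched to `h` in `Mo` but not in `N`. -/
noncomputable def Aset (Mo N : R → Option H) (h : H) : Finset R :=
  msetO Mo h \ msetO N h

/-- Residents matched to `h` in `N` but not in `Mo`. -/
noncomputable def Bset (Mo N : R → Option H) (h : H) : Finset R :=
  msetO N h \ msetO Mo h

/-- `σ h` is a correspondence chosen by hospital `h` between `N(h) ∖ Mo(h)` and
`Mo(h) ∖ N(h)`: it is injective, maps into `Mo(h) ∖ N(h)`, and pairs as many residents as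
possible (unpaired residents correspond to `⊥`). -/
def validCorr (Mo N : R → Option H) (σ : H → R → Option R) : Prop :=
  ∀ h,
    (∀ r' ∈ Bset Mo N h, ∀ r, σ h r' = some r → r ∈ Aset Mo N h) ∧
    (∀ r₁ ∈ Bset Mo N h, ∀ r₂ ∈ Bset Mo N h, ∀ r,
        σ h r₁ = some r → σ h r₂ = some r → r₁ = r₂) ∧
    ((∀ r ∈ Aset Mo N h, ∃ r' ∈ Bset Mo N h, σ h r' = some r) ∨
      (∀ r' ∈ Bset Mo N h, σ h r' ≠ none))

/-- The vote of resident `r` comparing partners `x` (in `N`) and `y` (in `Mo`):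
`1` if `r` prefers `x`, `-1` if `r` prefers `y`, `0` if they coincide. -/
noncomputable def rvote (rankR : R → H → ℕ) (r : R) (x y : Option H) : ℤ :=
  if x = y then 0
  else
    match x, y with
    | some a, some b => if rankR r a < rankR r b then 1 else -1
    | some _, none => 1
    | none, _ => -1

/-- The net vote of hospital `h` for `N` against `Mo`, given the correspondence `σ h`:
each resident of `N(h) ∖ Mo(h)` is compared with its corresponding resident of
`Mo(h) ∖ N(h)` (or with `⊥`), and each unpaired resident of `Mo(h) ∖ N(h)` contributes one
vote for `Mo`. -/
noncomputable def hvote (rankH : H → R → ℕ) (Mo N : R → Option H)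
    (σ : H → R → Option R) (h : H) : ℤ :=
  (∑ r' ∈ Bset Mo N h,
      (match σ h r' with
        | some r => if rankH h r' < rankH h r then (1 : ℤ) else -1
        | none => 1)) -
    ((Aset Mo N h).filter (fun r => ∀ r' ∈ Bset Mo N h, σ h r' ≠ some r)).card

/-- Total net vote for `N` against `Mo` (given correspondences `σ`). -/
noncomputable def totalVote (rankR : R → H → ℕ) (rankH : H → R → ℕ)
    (N Mo : R → Option H) (σ : H → R → Option R) : ℤ :=
  (∑ r : R, rvote rankR r (N r) (Mo r)) + ∑ h : H, hvote rankH Mo N σ h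

/-- `Mo` is popular among the feasible matchings of the HRLQ instance. -/
def popularAmongFeasible (E : R → H → Prop) (rankR : R → H → ℕ) (rankH : H → R → ℕ)
    (qp qm : H → ℕ) (Mo : R → Option H) : Prop :=
  ∀ N, feasibleO E qp qm N → ∀ σ, validCorr Mo N σ → totalVote rankR rankH N Mo σ ≤ 0

end HRLQ

open HRLQ Finset

/-!
Let `h^{s₀}` be the lowest copy of `h` holding a resident of the original instance. Stability
confines such residents to `h^{s₀}` and `h^{s₀+1}`: the lower dummies of an active copy must all
be matched, and no level-`t` dummy with `t > s₀` may stay at `h^t`. When `h^{s₀+1}` is active,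
its lower dummies take at least `cap h^{s₀+1}` seats of `h^{s₀}` and `h^{s₀+1}`, leaving at most
`cap h^{s₀} ≤ q⁺(h)` for residents.
-/

namespace HRLQ

variable {R H : Type} [Fintype R] [Fintype H] {T : ℕ} {qp qm : H → ℕ}

/-- The level-`(t-1)` dummies of `h` acceptable to `h^t`: all of them except the first
`q⁺(h) - q⁻(h)` at level `T - 1`, which list only `h^{T-1}`. -/
noncomputable def lowerDummies (T : ℕ) (qp qm : H → ℕ) (h : H) (t : ℕ) :
    Finset (Dummy H T qp qm) :=
  univ.filter fun d => d.h = h ∧ d.s + 1 = t ∧ ¬(d.s = T - 1 ∧ d.i < qp h - qm h)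

lemma cap_le_qp (hq : ∀ h, qm h ≤ qp h) (hs : Hos H T qm) : cap T qp qm hs ≤ qp hs.1 := by
  unfold cap
  split_ifs
  exacts [le_rfl, hq _]

/-- The witnesses are `⟨h, t-1, o + j⟩` for `j < cap h^t`, where the offset `o = q⁺(h) - q⁻(h)`
at `t = T` skips the dummies that list only `h^{T-1}`. -/
lemma cap_le_card_lowerDummies (hT : 2 ≤ T) (hq : ∀ h, qm h ≤ qp h) (h : H)
    (t : Fin (ell H T qm)) (ht : 1 ≤ t.val) :
    cap T qp qm (h, t) ≤ (lowerDummies T qp qm h t).card := by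
  have hq := hq h
  let o := if t.val = T then qp h - qm h else 0
  have hfit : ∀ j < cap T qp qm (h, t), o + j < qp h ∧ (T ≤ t.val - 1 → o + j < qm h) ∧
      ¬(t.val - 1 = T - 1 ∧ o + j < qp h - qm h) := by
    intro j hj
    simp only [cap, o] at hj ⊢
    split_ifs at hj ⊢ <;> omega
  let d : Fin (cap T qp qm (h, t)) → Dummy H T qp qm := fun j =>
    ⟨⟨h, ⟨t.val - 1, by omega⟩, ⟨o + j, (hfit j j.isLt).1⟩⟩,
      by show t.val - 1 ≤ ell H T qm - 2; have := t.isLt; omega, (hfit j j.isLt).2.1⟩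
  calc cap T qp qm (h, t) = (univ : Finset (Fin (cap T qp qm (h, t)))).card := by simp
    _ ≤ (lowerDummies T qp qm h t).card := by
      refine card_le_card_of_injOn d (fun j _ => ?_) (fun i _ j _ hij => ?_)
      · simp only [lowerDummies, coe_filter, mem_univ, true_and]
        exact ⟨rfl, by simp only [Dummy.s, d]; omega, (hfit j j.isLt).2.2⟩
      · have := congrArg Dummy.i hij
        simp only [Dummy.i, d] at this
        exact Fin.ext (by omega)

variable {E : R → H → Prop} {rankR : R → H → ℕ} {rankH : H → R → ℕ}
  {M : Res R H T qp qm → Option (Hos H T qm)}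

lemma mem_mset {x : Res R H T qp qm} {hs : Hos H T qm} : x ∈ mset M hs ↔ M x = some hs := by
  simp [mset]

lemma isMatchingRed.card_le_cap (hM : isMatchingRed T qp qm E M) {Y : Finset (Res R H T qp qm)}
    {a : Hos H T qm} (hY : ∀ x ∈ Y, M x = some a) : Y.card ≤ cap T qp qm a :=
  (card_le_card fun x hx => mem_mset.2 (hY x hx)).trans (hM.2 a)

lemma isMatchingRed.card_le_cap_add_cap (hM : isMatchingRed T qp qm E M)
    {Y : Finset (Res R H T qp qm)} {a b : Hos H T qm}
    (hY : ∀ x ∈ Y, M x = some a ∨ M x = some b) : Y.card ≤ cap T qp qm a + cap T qp qm b :=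
  (card_le_card fun x hx => mem_union.2 ((hY x hx).imp mem_mset.2 mem_mset.2)).trans
    ((card_union_le _ _).trans (add_le_add (hM.2 a) (hM.2 b)))

/-- A resident matched to `h^s` would rather move up to `h^t`, which ranks it above
its own level-`t` dummies. -/
lemma stableRed.dummy_ne_own_copy_of_lt (hM : stableRed T qp qm E rankR rankH M) {h : H}
    {s t : Fin (ell H T qm)} (hst : s < t) (hs : active M (h, s)) {d : Dummy H T qp qm}
    (hd : d.s = t.val) : M (Sum.inr d) ≠ some (h, t) := by
  obtain ⟨r, hr⟩ := hs
  intro hdt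
  have hdh : d.h = h := (hM.1.1 _ _ hdt).1
  refine hM.2 (Sum.inl r) (h, t)
    ⟨(hM.1.1 _ _ hr : E r h), ?_, Or.inr ⟨Sum.inr d, mem_mset.2 hdt, ?_⟩⟩
  · intro hs' hrs'
    rw [hr] at hrs'
    obtain rfl := Option.some.inj hrs'
    exact Or.inl hst
  · have hclass_d : hclass (R := R) (h, t) (Sum.inr d) = 2 := by
      simp only [hclass, hdh, hd, true_and, if_true]
      rw [if_neg (by omega)]
    left
    rw [hclass_d]
    simp [hclass]

/-- An unmatched lower dummy of `h^t` would block with `h^t`, which ranks it above every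
resident of the original instance. -/
lemma stableRed.lowerDummy_matched_of_active (hM : stableRed T qp qm E rankR rankH M) {h : H}
    {t : Fin (ell H T qm)} (ht : active M (h, t)) {d : Dummy H T qp qm}
    (hd : d ∈ lowerDummies T qp qm h t) :
    M (Sum.inr d) = some (h, t) ∨
      ∃ s : Fin (ell H T qm), s.val = d.s ∧ M (Sum.inr d) = some (h, s) := by
  obtain ⟨r, hr⟩ := ht
  simp only [lowerDummies, mem_filter, mem_univ, true_and] at hd
  obtain ⟨hdh, hdt, hexc⟩ := hd
  rcases hmd : M (Sum.inr d) with _ | ⟨h', s'⟩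
  · refine (hM.2 (Sum.inr d) (h, t) ⟨⟨hdh, Or.inr ⟨hdt.symm, hexc⟩⟩,
      fun _ h' => (nomatch hmd.symm.trans h'),
      Or.inr ⟨Sum.inl r, mem_mset.2 hr, Or.inl ?_⟩⟩).elim
    simp [hclass, hdh, show 1 ≤ t.val by omega, show d.s = t.val - 1 by omega]
  · obtain ⟨rfl, hs' | ⟨hs', -⟩⟩ := (hM.1.1 _ _ hmd : edge T qp qm E (Sum.inr d) (h', s'))
    · exact Or.inr ⟨s', hs', by rw [hdh]; rfl⟩
    · have hst : s' = t := Fin.ext (hs'.trans hdt)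
      exact Or.inl (by rw [hdh, hst]; rfl)

/-- Below `h^u` with `u ≥ s + 2` lies an active copy `h^s`, so the lower dummies of an active
`h^u` cannot stay at their own level: they fill `h^u`, leaving no room for its resident. -/
lemma stableRed.active_le_succ (hT : 2 ≤ T) (hq : ∀ h, qm h ≤ qp h)
    (hM : stableRed T qp qm E rankR rankH M) {h : H} {s u : Fin (ell H T qm)}
    (hs : active M (h, s)) (hu : active M (h, u)) : u.val ≤ s.val + 1 := by
  by_contra! hsu
  obtain ⟨r, hr⟩ := hu
  have hfill := hM.1.card_le_cap (Y := ({r} : Finset R).disjSum (lowerDummies T qp qm h u))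
    (a := (h, u)) <| by
    rintro (r' | d) hx
    · obtain rfl := mem_singleton.1 (inl_mem_disjSum.1 hx)
      exact hr
    · replace hx := inr_mem_disjSum.1 hx
      have hdu : d.s + 1 = u := (mem_filter.1 hx).2.2.1
      rcases hM.lowerDummy_matched_of_active ⟨r, hr⟩ hx with hdM | ⟨w, hw, hdw⟩
      · exact hdM
      · exact absurd hdw (hM.dummy_ne_own_copy_of_lt (Fin.lt_def.2 (by omega)) hs hw.symm)
  replace hfill := (card_disjSum _ _).symm.trans_le hfill
  rw [card_singleton] at hfill
  have := cap_le_card_lowerDummies hT hq h u (by omega)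
  omega

lemma isMatchingRed.card_le_cap_of_residents (hM : isMatchingRed T qp qm E M) {X : Finset R}
    {a : Hos H T qm} (hX : ∀ r ∈ X, M (Sum.inl r) = some a) : X.card ≤ cap T qp qm a := by
  have hcard := hM.card_le_cap (Y := X.map Function.Embedding.inl) (a := a) fun x hx => by
    obtain ⟨r, hr, rfl⟩ := mem_map.1 hx
    exact hX r hr
  exact (card_map _).symm.trans_le hcard

lemma stableRed.card_le_cap_of_active_succ (hT : 2 ≤ T) (hq : ∀ h, qm h ≤ qp h)
    (hM : stableRed T qp qm E rankR rankH M) {h : H} {s t : Fin (ell H T qm)}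
    (hst : t.val = s.val + 1) (ht : active M (h, t)) {X : Finset R}
    (hX : ∀ r ∈ X, M (Sum.inl r) = some (h, s) ∨ M (Sum.inl r) = some (h, t)) :
    X.card ≤ cap T qp qm (h, s) := by
  have hcard := hM.1.card_le_cap_add_cap (Y := X.disjSum (lowerDummies T qp qm h t))
    (a := (h, s)) (b := (h, t)) <| by
    rintro (r | d) hx
    · exact hX r (inl_mem_disjSum.1 hx)
    · replace hx := inr_mem_disjSum.1 hx
      have hdt : d.s + 1 = t := (mem_filter.1 hx).2.2.1
      rcases hM.lowerDummy_matched_of_active ht hx with hdM | ⟨w, hw, hdw⟩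
      · exact Or.inr hdM
      · exact Or.inl (by rwa [← Fin.ext (by omega : s.val = w.val)] at hdw)
  replace hcard := (card_disjSum _ _).symm.trans_le hcard
  have := cap_le_card_lowerDummies hT hq h t (by omega)
  omega

lemma stableRed.card_le_cap_of_levels (hT : 2 ≤ T) (hq : ∀ h, qm h ≤ qp h)
    (hM : stableRed T qp qm E rankR rankH M) {h : H} {s : Fin (ell H T qm)} {X : Finset R}
    (hX : ∀ r ∈ X, ∃ u : Fin (ell H T qm),
      M (Sum.inl r) = some (h, u) ∧ (u.val = s.val ∨ u.val = s.val + 1)) :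
    X.card ≤ cap T qp qm (h, s) := by
  by_cases hnext : ∃ t : Fin (ell H T qm), t.val = s.val + 1 ∧ active M (h, t)
  · obtain ⟨t, hst, ht⟩ := hnext
    refine hM.card_le_cap_of_active_succ hT hq hst ht fun r hr => ?_
    obtain ⟨u, hru, hu | hu⟩ := hX r hr
    · exact Or.inl (by rwa [Fin.ext hu] at hru)
    · exact Or.inr (by rwa [Fin.ext (hu.trans hst.symm)] at hru)
  · refine hM.1.card_le_cap_of_residents fun r hr => ?_
    obtain ⟨u, hru, hu | hu⟩ := hX r hr
    · rwa [Fin.ext hu] at hru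
    · exact absurd ⟨u, hu, r, hru⟩ hnext

end HRLQ

/-- In any stable matching `M` of the reduced HR instance `G'`, every hospital `h` of the
original HRLQ instance has at most `q⁺(h)` non-dummy residents matched across all of its
level copies. -/
theorem statement4 {R H : Type} [Fintype R] [Fintype H]
    (E : R → H → Prop) (rankR : R → H → ℕ) (rankH : H → R → ℕ) (qp qm : H → ℕ)
    (hq : ∀ h, qm h ≤ qp h)
    (M : Res R H 2 qp qm → Option (Hos H 2 qm))
    (hst : stableRed 2 qp qm E rankR rankH M) (h : H) :
    (univ.filter (fun r : R => ∃ s, M (Sum.inl r) = some (h, s))).card ≤ qp h := by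
  set X := univ.filter (fun r : R => ∃ s, M (Sum.inl r) = some (h, s))
  rcases X.eq_empty_or_nonempty with hX | ⟨r₀, hr₀⟩
  · simp [hX]
  set S := univ.filter fun s : Fin (ell H 2 qm) => active M (h, s)
  obtain ⟨u₀, hu₀⟩ := (mem_filter.1 hr₀).2
  have hS : S.Nonempty := ⟨u₀, mem_filter.2 ⟨mem_univ _, r₀, hu₀⟩⟩
  have hs₀ : active M (h, S.min' hS) := (mem_filter.1 (S.min'_mem hS)).2
  refine (hst.card_le_cap_of_levels (s := S.min' hS) le_rfl hq fun r hr => ?_).trans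
    (cap_le_qp hq _)
  obtain ⟨u, hru⟩ := (mem_filter.1 hr).2
  have hmin := Fin.le_iff_val_le_val.1 (S.min'_le u (mem_filter.2 ⟨mem_univ _, r, hru⟩))
  have hmax := hst.active_le_succ le_rfl hq hs₀ ⟨r, hru⟩
  exact ⟨u, hru, by omega⟩
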